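/- arXiv:2006.00425 — 8 statements merged into one kernel-verified Lean document; each statement's English description precedes it below -/
import Mathlib

section
/- Let E be a real inner product space, w : E → ℝ differentiable and 1-strongly convex, V the induced Bregman divergence, r : E → ℝ convex, F : E → ℝ differentiable with L-Lipschitz gradient for some L > 0, and Φ = F + r. Fix x, d ∈ E and η > 0. Let x⁺ be a minimizer over E of y ↦ ⟪d, y⟫ + (1/η)V(y,x) + r(y); set g = (x − x⁺)/η and e = d − ∇F(x). Then Φ(x⁺) − Φ(x) ≤ (η/2)‖e‖² − (η/2)(1 − ηL)‖g‖². -/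
/-!
The prox objective `y ↦ ⟪d, y⟫ + V y x / η + r y` is `1/η`-strongly convex, so comparing its value
at the minimiser `x⁺` with its value at `x` gives
`r x⁺ - r x ≤ ⟪d, x - x⁺⟫ - ‖x - x⁺‖² / η`, using `V x⁺ x ≥ ‖x⁺ - x‖² / 2`.
Adding the descent lemma `F x⁺ ≤ F x + ⟪∇F x, x⁺ - x⟫ + L/2 ‖x⁺ - x‖²` and writing `x - x⁺ = η g`
leaves the cross term `η ⟪e, g⟫`, which Young's inequality bounds by `η/2 (‖e‖² + ‖g‖²)`.
-/

open Set Filter Topology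
open scoped RealInnerProductSpace

section

variable {E : Type*} [NormedAddCommGroup E] [InnerProductSpace ℝ E]

theorem le_add_inner_add_sq_of_lipschitz_gradient {f : E → ℝ} {f' : E → E} {L : ℝ}
    (hf : ∀ x, HasFDerivAt f (innerSL ℝ (f' x)) x)
    (hLip : ∀ x y, ‖f' x - f' y‖ ≤ L * ‖x - y‖) (x u : E) :
    f (x + u) ≤ f x + ⟪f' x, u⟫ + L / 2 * ‖u‖ ^ 2 := by
  set φ : ℝ → ℝ := fun t ↦ f (x + t • u) - t * ⟪f' x, u⟫ - L / 2 * t ^ 2 * ‖u‖ ^ 2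
  have hφ : ∀ t, HasDerivAt φ (⟪f' (x + t • u) - f' x, u⟫ - L * t * ‖u‖ ^ 2) t := by
    intro t
    have hline : HasDerivAt (fun s : ℝ ↦ x + s • u) u t := by
      simpa using ((hasDerivAt_id t).smul_const u).const_add x
    refine ((((hf _).comp_hasDerivAt t hline).sub ((hasDerivAt_id t).mul_const ⟪f' x, u⟫)).sub
      (((hasDerivAt_pow 2 t).const_mul (L / 2)).mul_const (‖u‖ ^ 2))).congr_deriv ?_
    simp only [innerSL_apply_apply, inner_sub_left, one_mul]
    ring
  have hanti : AntitoneOn φ (Ici 0) := by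
    refine antitoneOn_of_hasDerivWithinAt_nonpos (convex_Ici 0)
      (fun t _ ↦ (hφ t).continuousAt.continuousWithinAt) (fun t _ ↦ (hφ t).hasDerivWithinAt) ?_
    intro t ht
    rw [interior_Ici] at ht
    have hinner : ⟪f' (x + t • u) - f' x, u⟫ ≤ L * t * ‖u‖ ^ 2 :=
      calc _ ≤ ‖f' (x + t • u) - f' x‖ * ‖u‖ := real_inner_le_norm _ _
        _ ≤ L * ‖x + t • u - x‖ * ‖u‖ := by gcongr; exact hLip _ _
        _ = L * t * ‖u‖ ^ 2 := by
          rw [add_sub_cancel_left, norm_smul, Real.norm_of_nonneg ht.le]; ring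
    linarith
  have h01 := hanti self_mem_Ici (mem_Ici.2 zero_le_one) zero_le_one
  simp only [φ, one_smul, zero_smul, add_zero] at h01
  linarith

theorem strongConvexOn_univ_of_le_add_inner {f : E → ℝ} {f' : E → E} {m : ℝ}
    (hf : ∀ x y, f x + ⟪f' x, y - x⟫ + m / 2 * ‖y - x‖ ^ 2 ≤ f y) :
    StrongConvexOn univ m f := by
  refine ⟨convex_univ, fun x _ y _ a b ha hb hab ↦ ?_⟩
  obtain rfl : a = 1 - b := eq_sub_of_add_eq hab
  set z := (1 - b) • x + b • y
  have hx : x - z = b • (x - y) := by module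
  have hy : y - z = (b - 1) • (x - y) := by module
  have h1 := hf z x
  have h2 := hf z y
  rw [hx, inner_smul_right, norm_smul, Real.norm_of_nonneg hb] at h1
  rw [hy, inner_smul_right, norm_smul, Real.norm_eq_abs, abs_sub_comm, abs_of_nonneg ha] at h2
  simp only [smul_eq_mul]
  linear_combination (1 - b) * h1 + b * h2

theorem StrongConvexOn.add_convexOn {s : Set E} {m : ℝ} {f g : E → ℝ}
    (hf : StrongConvexOn s m f) (hg : ConvexOn ℝ s g) : StrongConvexOn s m (f + g) := by
  have h := hf.add hg.uniformConvexOn_zero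
  rw [add_zero] at h
  exact h

theorem StrongConvexOn.add_sq_le_of_isMinOn {s : Set E} {m : ℝ} {f : E → ℝ} {a b : E}
    (hf : StrongConvexOn s m f) (hmin : IsMinOn f s a) (ha : a ∈ s) (hb : b ∈ s) :
    f a + m / 2 * ‖b - a‖ ^ 2 ≤ f b := by
  have hsegment : ∀ t ∈ Ioo (0 : ℝ) 1, f a + (1 - t) * (m / 2 * ‖b - a‖ ^ 2) ≤ f b := by
    rintro t ⟨ht0, ht1⟩
    have hconv := hf.2 ha hb (sub_nonneg.2 ht1.le) ht0.le (sub_add_cancel 1 t)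
    have hle : f a ≤ f ((1 - t) • a + t • b) :=
      hmin (hf.1 ha hb (sub_nonneg.2 ht1.le) ht0.le (sub_add_cancel 1 t))
    rw [norm_sub_rev] at hconv
    simp only [smul_eq_mul] at hconv
    refine le_of_mul_le_mul_left ?_ ht0
    linear_combination hle + hconv
  have hlim : Tendsto (fun t ↦ f a + (1 - t) * (m / 2 * ‖b - a‖ ^ 2)) (𝓝[>] 0)
      (𝓝 (f a + m / 2 * ‖b - a‖ ^ 2)) := by
    have hcont : Continuous (fun t : ℝ ↦ f a + (1 - t) * (m / 2 * ‖b - a‖ ^ 2)) := by fun_prop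
    simpa using (hcont.tendsto 0).mono_left nhdsWithin_le_nhds
  exact le_of_tendsto hlim (eventually_of_mem (Ioo_mem_nhdsGT zero_lt_one) hsegment)

theorem strongConvexOn_prox_objective {w r : E → ℝ} {gw : E → E} {m η : ℝ}
    (hw : ∀ x y, w x + ⟪gw x, y - x⟫ + m / 2 * ‖y - x‖ ^ 2 ≤ w y) (hr : ConvexOn ℝ univ r)
    (hη : 0 ≤ η) (d z : E) :
    StrongConvexOn univ (m / η)
      (fun y ↦ ⟪d, y⟫ + (1 / η) * (w y - w z - ⟪gw z, y - z⟫) + r y) := by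
  refine (strongConvexOn_univ_of_le_add_inner
    (f' := fun y ↦ d + (1 / η) • (gw y - gw z)) fun x y ↦ ?_).add_convexOn hr
  simp only [inner_add_left, real_inner_smul_left, inner_sub_left, inner_sub_right]
  have hscaled := mul_le_mul_of_nonneg_left (hw x y) (one_div_nonneg.2 hη)
  simp only [mul_add, inner_sub_right] at hscaled
  linear_combination hscaled

end

theorem pstorm_descent_inequality_general
    {E : Type*} [NormedAddCommGroup E] [InnerProductSpace ℝ E]
    (w : E → ℝ) (gw : E → E)
    (hsc : ∀ x y : E, w y ≥ w x + (inner ℝ (gw x) (y - x) : ℝ) + (1/2) * ‖y - x‖^2)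
    (V : E → E → ℝ)
    (hV : ∀ y z : E, V y z = w y - w z - (inner ℝ (gw z) (y - z) : ℝ))
    (r : E → ℝ) (hr : ConvexOn ℝ Set.univ r)
    (F : E → ℝ) (gF : E → E)
    (hF : ∀ x : E, HasFDerivAt F (innerSL ℝ (gF x)) x)
    (L : ℝ)
    (hLip : ∀ x y : E, ‖gF x - gF y‖ ≤ L * ‖x - y‖)
    (Φ : E → ℝ) (hΦ : ∀ x : E, Φ x = F x + r x)
    (x d : E) (η : ℝ) (hη : 0 < η)
    (xplus : E)
    (hxplus : ∀ y : E, (inner ℝ d xplus : ℝ) + (1/η) * V xplus x + r xplus ≤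
      (inner ℝ d y : ℝ) + (1/η) * V y x + r y)
    (g e : E) (hg : g = η⁻¹ • (x - xplus)) (he : e = d - gF x) :
    Φ xplus - Φ x ≤ (η/2) * ‖e‖^2 - (η/2) * (1 - η*L) * ‖g‖^2 := by
  obtain rfl : V = fun y z ↦ w y - w z - ⟪gw z, y - z⟫ := funext₂ hV
  have hr_step : r xplus - r x ≤ ⟪d, x - xplus⟫ - 1 / η * ‖x - xplus‖ ^ 2 := by
    have hprox := (strongConvexOn_prox_objective hsc hr hη.le d x).add_sq_le_of_isMinOn
      (isMinOn_univ_iff.2 hxplus) (mem_univ _) (mem_univ x)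
    have hbregman := hsc x xplus
    simp only [sub_self, inner_zero_right, mul_zero, add_zero] at hprox
    rw [norm_sub_rev] at hbregman
    rw [inner_sub_right]
    linear_combination hprox + 1 / η * hbregman
  have hF_step := le_add_inner_add_sq_of_lipschitz_gradient hF hLip x (xplus - x)
  rw [add_sub_cancel, ← neg_sub x xplus, inner_neg_right, norm_neg] at hF_step
  have hstep : x - xplus = η • g := by rw [hg, smul_inv_smul₀ hη.ne']
  have hnorm : ‖x - xplus‖ = η * ‖g‖ := by rw [hstep, norm_smul, Real.norm_of_nonneg hη.le]
  have hyoung : ⟪e, g⟫ ≤ ‖e‖ ^ 2 / 2 + ‖g‖ ^ 2 / 2 := by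
    linarith [real_inner_le_norm e g, two_mul_le_add_sq ‖e‖ ‖g‖]
  calc Φ xplus - Φ x = (F xplus - F x) + (r xplus - r x) := by rw [hΦ, hΦ]; ring
    _ ≤ ⟪e, x - xplus⟫ + (L / 2 - 1 / η) * ‖x - xplus‖ ^ 2 := by
        rw [he, inner_sub_left]; linarith
    _ = η * ⟪e, g⟫ + (η * L / 2 - 1) * η * ‖g‖ ^ 2 := by
        rw [hnorm, hstep, real_inner_smul_right]; field_simp
    _ ≤ (η/2) * ‖e‖^2 - (η/2) * (1 - η*L) * ‖g‖^2 := by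
        linear_combination η * hyoung

theorem pstorm_descent_inequality
    {E : Type*} [NormedAddCommGroup E] [InnerProductSpace ℝ E]
    (w : E → ℝ) (gw : E → E)
    (hw : ∀ x : E, HasFDerivAt w (innerSL ℝ (gw x)) x)
    (hsc : ∀ x y : E, w y ≥ w x + (inner ℝ (gw x) (y - x) : ℝ) + (1/2) * ‖y - x‖^2)
    (V : E → E → ℝ)
    (hV : ∀ y z : E, V y z = w y - w z - (inner ℝ (gw z) (y - z) : ℝ))
    (r : E → ℝ) (hr : ConvexOn ℝ Set.univ r)
    (F : E → ℝ) (gF : E → E)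
    (hF : ∀ x : E, HasFDerivAt F (innerSL ℝ (gF x)) x)
    (L : ℝ) (hL : 0 < L)
    (hLip : ∀ x y : E, ‖gF x - gF y‖ ≤ L * ‖x - y‖)
    (Φ : E → ℝ) (hΦ : ∀ x : E, Φ x = F x + r x)
    (x d : E) (η : ℝ) (hη : 0 < η)
    (xplus : E)
    (hxplus : ∀ y : E, (inner ℝ d xplus : ℝ) + (1/η) * V xplus x + r xplus ≤
      (inner ℝ d y : ℝ) + (1/η) * V y x + r y)
    (g e : E) (hg : g = η⁻¹ • (x - xplus)) (he : e = d - gF x) :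
    Φ xplus - Φ x ≤ (η/2) * ‖e‖^2 - (η/2) * (1 - η*L) * ‖g‖^2 :=
  pstorm_descent_inequality_general w gw hsc V hV r hr F gF hF L hLip Φ hΦ x d η hη xplus hxplus g e
    hg he
end

section
/- Let E be a real inner product space, w : E → ℝ differentiable and 1-strongly convex, V the induced Bregman divergence, and r : E → ℝ convex. Fix x, d ∈ E and η > 0, and let x⁺ be a minimizer over E of y ↦ ⟪d, y⟫ + (1/η)V(y,x) + r(y); set g = (x − x⁺)/η. Then ⟪d, g⟫ ≥ ‖g‖² + (1/η)(r(x⁺) − r(x)). -/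
/-! The optimality condition of the prox step, tested against the competitor `y = x`, gives
`r x⁺ - r x ≤ ⟪d + η⁻¹ (∇w x⁺ - ∇w x), x - x⁺⟫`, and strong convexity of `w` makes `∇w`
strongly monotone, `‖x - x⁺‖² ≤ ⟪∇w x - ∇w x⁺, x - x⁺⟫`. Adding the two and dividing by `η`
is the claim. -/

open Set

theorem ConvexOn.sub_le_of_isMinOn_add {E : Type*} [NormedAddCommGroup E] [NormedSpace ℝ E]
    {f r : E → ℝ} {f' : E →L[ℝ] ℝ} {a : E} (hf : HasFDerivAt f f' a)
    (hr : ConvexOn ℝ univ r) (hmin : IsMinOn (f + r) univ a) (y : E) :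
    r a - r y ≤ f' (y - a) := by
  -- On the segment from `a` to `y`, convexity bounds `f + r` by `φ t + r a`, so `φ` is minimal at `0`.
  set φ : ℝ → ℝ := fun t => f (a + t • (y - a)) + t * (r y - r a)
  have hφ : HasDerivAt φ (f' (y - a) + (r y - r a)) 0 := by
    have hline : HasDerivAt (fun t : ℝ => a + t • (y - a)) (y - a) 0 := by
      simpa using ((hasDerivAt_id (0 : ℝ)).smul_const (y - a)).const_add a
    have hf0 : HasFDerivAt f f' (a + (0 : ℝ) • (y - a)) := by simpa using hf
    have h := (hf0.comp_hasDerivAt 0 hline).add ((hasDerivAt_id (0 : ℝ)).mul_const (r y - r a))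
    rwa [one_mul] at h
  have hφmin : IsMinOn φ (Icc 0 1) 0 := by
    refine isMinOn_iff.2 fun t ⟨ht0, ht1⟩ => ?_
    have hconv := hr.2 (mem_univ a) (mem_univ y) (sub_nonneg.2 ht1) ht0 (by ring)
    have hseg : (1 - t) • a + t • y = a + t • (y - a) := by module
    have hle := isMinOn_univ_iff.1 hmin (a + t • (y - a))
    simp only [hseg, smul_eq_mul, Pi.add_apply] at hconv hle
    simp only [φ, zero_smul, add_zero, zero_mul]
    linarith
  have h1 : (1 : ℝ) ∈ posTangentConeAt (Icc 0 1) 0 :=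
    mem_posTangentConeAt_of_segment_subset (by simp [segment_eq_Icc])
  have := hφmin.localize.hasFDerivWithinAt_nonneg hφ.hasFDerivAt.hasFDerivWithinAt h1
  rw [map_sub]
  simp only [map_sub, ContinuousLinearMap.toSpanSingleton_apply, smul_eq_mul, one_mul] at this
  linarith

section InnerProductSpace

variable {E : Type*} [NormedAddCommGroup E] [InnerProductSpace ℝ E] {w : E → ℝ} {gw : E → E}

theorem le_inner_sub_sub_of_strongConvex {m : ℝ}
    (hsc : ∀ x y : E, w y ≥ w x + inner ℝ (gw x) (y - x) + m / 2 * ‖y - x‖ ^ 2) (x y : E) :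
    m * ‖x - y‖ ^ 2 ≤ inner ℝ (gw x - gw y) (x - y) := by
  have h1 := hsc x y
  have h2 := hsc y x
  rw [← neg_sub x y, inner_neg_right, norm_neg] at h1
  rw [inner_sub_left]
  linarith

theorem hasFDerivAt_bregman (hw : ∀ x : E, HasFDerivAt w (innerSL ℝ (gw x)) x) (z y : E) :
    HasFDerivAt (fun y => w y - w z - inner ℝ (gw z) (y - z)) (innerSL ℝ (gw y - gw z)) y := by
  have hlin : HasFDerivAt (fun y => inner ℝ (gw z) (y - z)) (innerSL ℝ (gw z)) y :=
    (innerSL ℝ (gw z)).hasFDerivAt.comp y ((hasFDerivAt_id y).sub_const z)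
  have h := ((hw y).sub_const (w z)).sub hlin
  rwa [← map_sub] at h

end InnerProductSpace

theorem prox_gradient_mapping_inequality
    {E : Type*} [NormedAddCommGroup E] [InnerProductSpace ℝ E]
    (w : E → ℝ) (gw : E → E)
    (hw : ∀ x : E, HasFDerivAt w (innerSL ℝ (gw x)) x)
    (hsc : ∀ x y : E, w y ≥ w x + (inner ℝ (gw x) (y - x) : ℝ) + (1/2) * ‖y - x‖^2)
    (V : E → E → ℝ)
    (hV : ∀ y z : E, V y z = w y - w z - (inner ℝ (gw z) (y - z) : ℝ))
    (r : E → ℝ) (hr : ConvexOn ℝ Set.univ r)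
    (x d : E) (η : ℝ) (hη : 0 < η)
    (xplus : E)
    (hxplus : ∀ y : E, (inner ℝ d xplus : ℝ) + (1/η) * V xplus x + r xplus ≤
      (inner ℝ d y : ℝ) + (1/η) * V y x + r y)
    (g : E) (hg : g = η⁻¹ • (x - xplus)) :
    (inner ℝ d g : ℝ) ≥ ‖g‖^2 + (1/η) * (r xplus - r x) := by
  have hf : HasFDerivAt (fun y => inner ℝ d y + (1/η) * V y x)
      (innerSL ℝ d + (1/η) • innerSL ℝ (gw xplus - gw x)) xplus := by
    simp only [hV]
    exact (innerSL ℝ d).hasFDerivAt.add ((hasFDerivAt_bregman hw x xplus).const_mul (1/η))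
  have hopt := hr.sub_le_of_isMinOn_add hf (isMinOn_univ_iff.2 hxplus) x
  have hmono := le_inner_sub_sub_of_strongConvex (m := 1) (by simpa using hsc) x xplus
  simp only [add_apply, smul_apply, innerSL_apply_apply,
    smul_eq_mul, ← neg_sub (gw x), inner_neg_left] at hopt
  have hdescent : (1/η) * ‖x - xplus‖ ^ 2 + (r xplus - r x) ≤ inner ℝ d (x - xplus) := by
    linarith [mul_le_mul_of_nonneg_left hmono (one_div_pos.2 hη).le]
  rw [hg, real_inner_smul_right, norm_smul, mul_pow, Real.norm_eq_abs, sq_abs, ← one_div]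
  linarith [mul_le_mul_of_nonneg_left hdescent (one_div_pos.2 hη).le]
end

section
/- Let L > 0, σ ≥ 0, m > 0, m₀ > 0 be reals, K ≥ 1 an integer, (η_k) a sequence of positive reals, and (β_k) a sequence with β_k ∈ (0,1) for all k. Let (Φ_k) be a real sequence and (E_k), (Ḡ_k) nonnegative real sequences such that: Φ_k ≥ Φ* for all k ≤ K, where Φ* ∈ ℝ; E_0 ≤ σ²/m₀; for every 0 ≤ k ≤ K−1, Φ_{k+1} − Φ_k ≤ (η_k/2)(2 − η_k L) E_k − (η_k/4)(1 − η_k L) Ḡ_k and E_{k+1} ≤ 2β_k²σ²/m + (4(1−β_k)²η_k²L²/m) Ḡ_k + (1−β_k)²(1 + 4η_k²L²/m) E_k; and for every 0 ≤ k ≤ K−1 the parameter conditions (1/4)(1 − η_k L) − (η_k/(5 m η_{k+1}))(1−β_k)² > 0 and (η_k/2)(2 − η_k L) − 1/(20 η_k L²) + (1−β_k)²(1 + 4η_k²L²/m)/(20 η_{k+1} L²) ≤ 0 hold. Then ∑_{k=0}^{K−1} [ (η_k/4)(1 − η_k L) − (η_k²/(5 m η_{k+1}))(1−β_k)² ] Ḡ_k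 ≤ Φ_0 − Φ* + σ²/(20 m₀ η_0 L²) + ∑_{k=0}^{K−1} β_k²σ²/(10 m η_{k+1} L²). -/
/-!
The potential `Φ k + E k / (20 η_k L²)` couples the objective with the variance of the gradient
estimator. The descent inequality, the error recursion scaled by `1 / (20 η_{k+1} L²)` and the
second parameter condition (which absorbs every `E k` term) show that each step decreases the
potential by the `k`-th summand on the left, up to the noise term `β_k² σ² / (10 m η_{k+1} L²)`.
Summing telescopes; the potential starts below `Φ 0 + σ² / (20 m₀ η_0 L²)` and ends above `Φstar`.
-/

theorem Finset.sum_range_le_sub_add_sum_of_le {M : Type*} [AddCommGroup M] [PartialOrder M]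
    [IsOrderedAddMonoid M] {a b V : ℕ → M} {K : ℕ} (h : ∀ k < K, a k ≤ V k - V (k + 1) + b k) :
    ∑ k ∈ range K, a k ≤ V 0 - V K + ∑ k ∈ range K, b k := by
  calc ∑ k ∈ range K, a k ≤ ∑ k ∈ range K, (V k - V (k + 1) + b k) :=
        sum_le_sum fun k hk => h k (mem_range.mp hk)
    _ = V 0 - V K + ∑ k ∈ range K, b k := by rw [sum_add_distrib, sum_range_sub']

noncomputable def pstormPotential (L : ℝ) (η Φ E : ℕ → ℝ) (k : ℕ) : ℝ :=
  Φ k + E k / (20 * η k * L ^ 2)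

theorem pstorm_potential_decrease {L σ m η η' β Φ Φ' E E' G : ℝ} (hL : L ≠ 0) (hη' : 0 ≤ η')
    (hE : 0 ≤ E)
    (hdesc : Φ' - Φ ≤ (η / 2) * (2 - η * L) * E - (η / 4) * (1 - η * L) * G)
    (herr : E' ≤ 2 * β ^ 2 * σ ^ 2 / m + (4 * (1 - β) ^ 2 * η ^ 2 * L ^ 2 / m) * G
      + (1 - β) ^ 2 * (1 + 4 * η ^ 2 * L ^ 2 / m) * E)
    (hcond : (η / 2) * (2 - η * L) - 1 / (20 * η * L ^ 2)
      + (1 - β) ^ 2 * (1 + 4 * η ^ 2 * L ^ 2 / m) / (20 * η' * L ^ 2) ≤ 0) :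
    ((η / 4) * (1 - η * L) - (η ^ 2 / (5 * m * η')) * (1 - β) ^ 2) * G
      ≤ (Φ + E / (20 * η * L ^ 2)) - (Φ' + E' / (20 * η' * L ^ 2))
        + β ^ 2 * σ ^ 2 / (10 * m * η' * L ^ 2) := by
  have hE' : E' / (20 * η' * L ^ 2) ≤ β ^ 2 * σ ^ 2 / (10 * m * η' * L ^ 2)
      + (η ^ 2 / (5 * m * η')) * (1 - β) ^ 2 * G
      + (1 - β) ^ 2 * (1 + 4 * η ^ 2 * L ^ 2 / m) / (20 * η' * L ^ 2) * E := by
    calc E' / (20 * η' * L ^ 2)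
        ≤ (2 * β ^ 2 * σ ^ 2 / m + (4 * (1 - β) ^ 2 * η ^ 2 * L ^ 2 / m) * G
          + (1 - β) ^ 2 * (1 + 4 * η ^ 2 * L ^ 2 / m) * E) / (20 * η' * L ^ 2) := by gcongr
      _ = _ := by field_simp; ring
  linear_combination hdesc + hE' + mul_nonpos_of_nonpos_of_nonneg hcond hE

theorem pstorm_generic_varying_stepsize_general
    (L σ m m₀ : ℝ) (hL : 0 < L)
    (K : ℕ)
    (η β : ℕ → ℝ) (hη : ∀ k, 0 < η k)
    (Φ E G : ℕ → ℝ) (Φstar : ℝ)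
    (hΦ : ∀ k ≤ K, Φstar ≤ Φ k)
    (hE : ∀ k, 0 ≤ E k)
    (hE0 : E 0 ≤ σ^2 / m₀)
    (hdesc : ∀ k < K, Φ (k+1) - Φ k ≤
      (η k / 2) * (2 - η k * L) * E k - (η k / 4) * (1 - η k * L) * G k)
    (herr : ∀ k < K, E (k+1) ≤ 2 * (β k)^2 * σ^2 / m
      + (4 * (1 - β k)^2 * (η k)^2 * L^2 / m) * G k
      + (1 - β k)^2 * (1 + 4 * (η k)^2 * L^2 / m) * E k)
    (hcond2 : ∀ k < K, (η k / 2) * (2 - η k * L) - 1 / (20 * η k * L^2)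
      + (1 - β k)^2 * (1 + 4 * (η k)^2 * L^2 / m) / (20 * η (k+1) * L^2) ≤ 0) :
    ∑ k ∈ Finset.range K,
        ((η k / 4) * (1 - η k * L) - ((η k)^2 / (5 * m * η (k+1))) * (1 - β k)^2) * G k
      ≤ Φ 0 - Φstar + σ^2 / (20 * m₀ * η 0 * L^2)
        + ∑ k ∈ Finset.range K, (β k)^2 * σ^2 / (10 * m * η (k+1) * L^2) := by
  set V := pstormPotential L η Φ E
  have hstart : V 0 ≤ Φ 0 + σ ^ 2 / (20 * m₀ * η 0 * L ^ 2) := by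
    have := hη 0
    calc V 0 ≤ Φ 0 + σ ^ 2 / m₀ / (20 * η 0 * L ^ 2) := by
          unfold V pstormPotential; gcongr
      _ = Φ 0 + σ ^ 2 / (20 * m₀ * η 0 * L ^ 2) := by rw [div_div]; ring
  have hend : Φstar ≤ V K := by
    have := hη K
    have := hE K
    exact (hΦ K le_rfl).trans (le_add_of_nonneg_right (by positivity))
  have hstep : ∀ k < K, _ ≤ V k - V (k + 1) + (β k)^2 * σ^2 / (10 * m * η (k+1) * L^2) :=
    fun k hk => pstorm_potential_decrease hL.ne' (hη (k + 1)).le (hE k) (hdesc k hk) (herr k hk)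
      (hcond2 k hk)
  linarith [Finset.sum_range_le_sub_add_sum_of_le hstep]

theorem pstorm_generic_varying_stepsize
    (L σ m m₀ : ℝ) (hL : 0 < L) (hσ : 0 ≤ σ) (hm : 0 < m) (hm₀ : 0 < m₀)
    (K : ℕ) (hK : 1 ≤ K)
    (η β : ℕ → ℝ) (hη : ∀ k, 0 < η k) (hβ : ∀ k, β k ∈ Set.Ioo (0:ℝ) 1)
    (Φ E G : ℕ → ℝ) (Φstar : ℝ)
    (hΦ : ∀ k ≤ K, Φstar ≤ Φ k)
    (hE : ∀ k, 0 ≤ E k) (hG : ∀ k, 0 ≤ G k)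
    (hE0 : E 0 ≤ σ^2 / m₀)
    (hdesc : ∀ k < K, Φ (k+1) - Φ k ≤
      (η k / 2) * (2 - η k * L) * E k - (η k / 4) * (1 - η k * L) * G k)
    (herr : ∀ k < K, E (k+1) ≤ 2 * (β k)^2 * σ^2 / m
      + (4 * (1 - β k)^2 * (η k)^2 * L^2 / m) * G k
      + (1 - β k)^2 * (1 + 4 * (η k)^2 * L^2 / m) * E k)
    (hcond1 : ∀ k < K,
      0 < (1/4) * (1 - η k * L) - (η k / (5 * m * η (k+1))) * (1 - β k)^2)
    (hcond2 : ∀ k < K, (η k / 2) * (2 - η k * L) - 1 / (20 * η k * L^2)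
      + (1 - β k)^2 * (1 + 4 * (η k)^2 * L^2 / m) / (20 * η (k+1) * L^2) ≤ 0) :
    ∑ k ∈ Finset.range K,
        ((η k / 4) * (1 - η k * L) - ((η k)^2 / (5 * m * η (k+1))) * (1 - β k)^2) * G k
      ≤ Φ 0 - Φstar + σ^2 / (20 * m₀ * η 0 * L^2)
        + ∑ k ∈ Finset.range K, (β k)^2 * σ^2 / (10 * m * η (k+1) * L^2) :=
  pstorm_generic_varying_stepsize_general L σ m m₀ hL K η β hη Φ E G Φstar hΦ hE hE0 hdesc herr
    hcond2
end

section
/- Let L > 0 and 0 < η ≤ 4^{1/3}/8 be reals and m ≥ 1 an integer (or real). For every integer k ≥ 0 define η_k = η/(L(k+4)^{1/3}) and β_k = (1 + 24η_k²L² − η_{k+1}/η_k)/(1 + 4η_k²L²). Then for every k ≥ 0: β_k ∈ (0,1), (1/4)(1 − η_k L) − (η_k/(5 m η_{k+1}))(1−β_k)² > 0, and (η_k/2)(2 − η_k L) − 1/(20 η_k L²) + (1−β_k)²(1 + 4η_k²L²/m)/(20 η_{k+1} L²) ≤ 0. -/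
/-!
Write `a = η_k L` and `r = η_{k+1}/η_k`; then `1 - β_k = (r - 20a²)/(1 + 4a²)` and all three
conditions become inequalities in `a`, `r`, `m` alone, which hold as soon as `a ≤ 1/8` and
`20a² < r < 1`. For the schedule, `a = η/(k+4)^{1/3} ≤ 1/8` because `η ≤ 4^{1/3}/8`, and
`r = (k+4)^{1/3}/(k+5)^{1/3} ∈ [1/2, 1)`, while `20a² ≤ 20/64 < 1/2`.
-/

namespace PStorm

/-- The momentum `β_k` as a function of `a = η_k L` and `r = η_{k+1}/η_k`. -/
noncomputable def momentum (a r : ℝ) : ℝ := (1 + 24 * a ^ 2 - r) / (1 + 4 * a ^ 2)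

section Momentum

variable {a r m : ℝ}

lemma one_sub_momentum (a r : ℝ) :
    1 - momentum a r = (r - 20 * a ^ 2) / (1 + 4 * a ^ 2) := by
  rw [momentum, one_sub_div (by positivity)]
  ring_nf

lemma momentum_mem_Ioo (hr : r < 1) (har : 20 * a ^ 2 < r) : momentum a r ∈ Set.Ioo 0 1 := by
  have hD : 0 < 1 + 4 * a ^ 2 := by positivity
  refine ⟨div_pos (by nlinarith [sq_nonneg a]) hD, (div_lt_one hD).2 (by linarith)⟩

lemma one_sub_momentum_sq_le (har : 20 * a ^ 2 ≤ r) : (1 - momentum a r) ^ 2 ≤ r ^ 2 := by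
  have hnum : 0 ≤ r - 20 * a ^ 2 := sub_nonneg.2 har
  have hle : 1 - momentum a r ≤ r - 20 * a ^ 2 := by
    rw [one_sub_momentum]
    exact div_le_self hnum (by nlinarith [sq_nonneg a])
  have hnonneg : 0 ≤ 1 - momentum a r := by rw [one_sub_momentum]; positivity
  nlinarith [sq_nonneg a]

lemma one_sub_momentum_sq_mul_le (hm : 1 ≤ m) :
    (1 - momentum a r) ^ 2 * (1 + 4 * a ^ 2 / m) ≤ (r - 20 * a ^ 2) ^ 2 := by
  have hD : 1 ≤ 1 + 4 * a ^ 2 := by nlinarith [sq_nonneg a]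
  have hdiv : 4 * a ^ 2 / m ≤ 4 * a ^ 2 := div_le_self (by positivity) hm
  calc (1 - momentum a r) ^ 2 * (1 + 4 * a ^ 2 / m)
      ≤ (1 - momentum a r) ^ 2 * (1 + 4 * a ^ 2) := by gcongr
    _ = (r - 20 * a ^ 2) ^ 2 / (1 + 4 * a ^ 2) := by
        rw [one_sub_momentum, div_pow, sq (1 + 4 * a ^ 2), div_mul_eq_mul_div,
          mul_div_mul_right _ _ (by positivity)]
    _ ≤ (r - 20 * a ^ 2) ^ 2 := div_le_self (sq_nonneg _) hD

lemma descent_coeff_pos (ha : a ≤ 1 / 8) (hr0 : 0 < r) (hr : r ≤ 1) (har : 20 * a ^ 2 ≤ r)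
    (hm : 1 ≤ m) : 0 < 1 / 4 * (1 - a) - 1 / (5 * m * r) * (1 - momentum a r) ^ 2 := by
  have hsq := one_sub_momentum_sq_le har
  have hcoeff : 1 / (5 * m * r) * (1 - momentum a r) ^ 2 ≤ 1 / 5 := by
    calc 1 / (5 * m * r) * (1 - momentum a r) ^ 2 ≤ 1 / (5 * m * r) * r ^ 2 := by gcongr
      _ = r / (5 * m) := by field_simp
      _ ≤ 1 / 5 := by rw [div_le_div_iff₀ (by positivity) (by norm_num)]; nlinarith
  linarith

/-- The third condition multiplied by `20 η_k L² > 0`. -/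
lemma scaled_lyapunov_coeff_nonpos (ha : 0 ≤ a) (hr0 : 0 < r) (hr : r ≤ 1)
    (har : 20 * a ^ 2 ≤ r) (hm : 1 ≤ m) :
    10 * a ^ 2 * (2 - a) - 1 + (1 - momentum a r) ^ 2 * (1 + 4 * a ^ 2 / m) / r ≤ 0 := by
  have hquad : (r - 20 * a ^ 2) ^ 2 / r ≤ r - 20 * a ^ 2 := by
    rw [div_le_iff₀ hr0]
    nlinarith [sq_nonneg a]
  have hmom : (1 - momentum a r) ^ 2 * (1 + 4 * a ^ 2 / m) / r ≤ r - 20 * a ^ 2 :=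
    (div_le_div_of_nonneg_right (one_sub_momentum_sq_mul_le hm) hr0.le).trans hquad
  nlinarith [pow_nonneg ha 3]

end Momentum

theorem step_conditions {L m x y β : ℝ} (hL : 0 < L) (hx : 0 < x) (hy : 0 < y)
    (hxL : x * L ≤ 1 / 8) (hyx : y / x < 1) (hmom : 20 * (x * L) ^ 2 < y / x) (hm : 1 ≤ m)
    (hβ : β = (1 + 24 * x ^ 2 * L ^ 2 - y / x) / (1 + 4 * x ^ 2 * L ^ 2)) :
    β ∈ Set.Ioo (0:ℝ) 1
      ∧ 0 < (1/4) * (1 - x * L) - (x / (5 * m * y)) * (1 - β)^2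
      ∧ (x / 2) * (2 - x * L) - 1 / (20 * x * L^2)
        + (1 - β)^2 * (1 + 4 * x^2 * L^2 / m) / (20 * y * L^2) ≤ 0 := by
  have hβ' : β = momentum (x * L) (y / x) := by rw [hβ, momentum]; ring
  have hr0 : 0 < y / x := div_pos hy hx
  subst hβ'
  refine ⟨momentum_mem_Ioo hyx hmom, ?_, ?_⟩
  · have hxy : x / (5 * m * y) = 1 / (5 * m * (y / x)) := by field_simp
    rw [hxy]
    exact descent_coeff_pos hxL hr0 hyx.le hmom.le hm
  · have key := scaled_lyapunov_coeff_nonpos (by positivity) hr0 hyx.le hmom.le hm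
    have hrw : (x / 2) * (2 - x * L) - 1 / (20 * x * L^2)
        + (1 - momentum (x * L) (y / x))^2 * (1 + 4 * x^2 * L^2 / m) / (20 * y * L^2)
        = (10 * (x * L) ^ 2 * (2 - x * L) - 1
          + (1 - momentum (x * L) (y / x)) ^ 2 * (1 + 4 * (x * L) ^ 2 / m) / (y / x))
          / (20 * x * L ^ 2) := by
      field_simp
      ring
    rw [hrw]
    exact div_nonpos_of_nonpos_of_nonneg key (by positivity)

lemma half_le_rpow_third_div (u : ℝ) (hu : 1 ≤ u) :
    1 / 2 ≤ u ^ ((1:ℝ)/3) / (u + 1) ^ ((1:ℝ)/3) := by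
  have hq : 0 ≤ u / (u + 1) := by positivity
  have hq1 : u / (u + 1) ≤ 1 := (div_le_one (by linarith)).2 (by linarith)
  rw [← Real.div_rpow (by linarith) (by linarith)]
  refine le_trans ?_ (Real.self_le_rpow_of_le_one hq hq1 (by norm_num))
  rw [le_div_iff₀ (by linarith)]
  linarith

lemma rpow_third_div_lt_one (u : ℝ) (hu : 0 ≤ u) :
    u ^ ((1:ℝ)/3) / (u + 1) ^ ((1:ℝ)/3) < 1 :=
  (div_lt_one (by positivity)).2 (Real.rpow_lt_rpow hu (by linarith) (by norm_num))

end PStorm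

open PStorm in
theorem pstorm_varying_parameter_conditions
    (L η m : ℝ) (hL : 0 < L) (hη : 0 < η) (hη2 : η ≤ (4:ℝ)^((1:ℝ)/3) / 8)
    (hm : 1 ≤ m)
    (ηk βk : ℕ → ℝ)
    (hηk : ∀ k : ℕ, ηk k = η / (L * ((k:ℝ) + 4)^((1:ℝ)/3)))
    (hβk : ∀ k : ℕ, βk k =
      (1 + 24 * (ηk k)^2 * L^2 - ηk (k+1) / ηk k) / (1 + 4 * (ηk k)^2 * L^2)) :
    ∀ k : ℕ, βk k ∈ Set.Ioo (0:ℝ) 1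
      ∧ 0 < (1/4) * (1 - ηk k * L) - (ηk k / (5 * m * ηk (k+1))) * (1 - βk k)^2
      ∧ (ηk k / 2) * (2 - ηk k * L) - 1 / (20 * ηk k * L^2)
        + (1 - βk k)^2 * (1 + 4 * (ηk k)^2 * L^2 / m) / (20 * ηk (k+1) * L^2) ≤ 0 := by
  intro k
  set u : ℝ := (k:ℝ) + 4
  have hu : 4 ≤ u := by simp [u]
  set t := u ^ ((1:ℝ)/3)
  set s := (u + 1) ^ ((1:ℝ)/3)
  have ht : 0 < t := by positivity
  have hx : ηk k = η / (L * t) := hηk k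
  have hy : ηk (k + 1) = η / (L * s) := by
    rw [hηk, show ((k + 1 : ℕ) : ℝ) + 4 = u + 1 by push_cast [u]; ring]
  have hxL : ηk k * L = η / t := by rw [hx]; field_simp
  have hyx : ηk (k + 1) / ηk k = t / s := by rw [hx, hy]; field_simp
  have hη8 : 8 * η ≤ t := by
    linarith [Real.rpow_le_rpow (by norm_num) hu (by norm_num : (0:ℝ) ≤ 1 / 3)]
  have ha : η / t ≤ 1 / 8 := by rw [div_le_iff₀ ht]; linarith
  have hr := half_le_rpow_third_div u (by linarith)
  refine step_conditions hL (by rw [hx]; positivity) (by rw [hy]; positivity) (by rwa [hxL])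
    (by rw [hyx]; exact rpow_third_div_lt_one u (by linarith)) ?_ hm (hβk k)
  rw [hxL, hyx]
  nlinarith [div_pos hη ht]
end

section
/- For every integer K ≥ 1, ∑_{k=0}^{K−1} (k+5)^{1/3} ( 1 − (k+4)^{1/3}/(k+5)^{1/3} )² ≤ 1/(6·9^{1/3}). -/
/-!
With `a = x^{1/3}` and `b = (x+1)^{1/3}`, the term `b (1 - a/b)^2 = (b - a)^2 / b` equals
`1 / (b (b^2 + ab + a^2)^2) ≤ 1 / (9 a^5)`, since `b - a = 1 / (b^2 + ab + a^2)`. For `c = (x-1)^{1/3}`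
one has `1 / (9 a^5) ≤ g(x-1) - g(x)` with `g(x) = 1 / (6 x^{2/3})`: after clearing denominators and
cubing, this is the polynomial inequality `(x-1)^2 (3x+2)^3 ≤ 27 x^5`. The sum over `x = k + 4`
therefore telescopes to at most `g(3) = 1 / (6 · 9^{1/3})`.
-/

open Real

namespace Real

lemma rpow_one_third_pow_three {x : ℝ} (hx : 0 ≤ x) : (x ^ ((1 : ℝ) / 3)) ^ 3 = x := by
  simpa only [one_div, Nat.cast_ofNat] using rpow_inv_natCast_pow hx (n := 3) three_ne_zero

lemma rpow_two_thirds_eq_sq {x : ℝ} (hx : 0 ≤ x) :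
    x ^ ((2 : ℝ) / 3) = (x ^ ((1 : ℝ) / 3)) ^ 2 := by
  rw [← rpow_natCast, ← rpow_mul hx]
  norm_num

end Real

lemma mul_one_sub_div_sq_le_of_cube_sub_cube_eq_one {a b : ℝ} (ha : 0 < a) (hab : a ≤ b)
    (h : b ^ 3 - a ^ 3 = 1) : b * (1 - a / b) ^ 2 ≤ 1 / (9 * a ^ 5) := by
  have hb : 0 < b := ha.trans_le hab
  set S := b ^ 2 + a * b + a ^ 2
  have hS : 3 * a ^ 2 ≤ S := by nlinarith
  have hsub : b - a = 1 / S := by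
    refine eq_one_div_of_mul_eq_one_left ?_
    linear_combination h
  calc b * (1 - a / b) ^ 2 = (b - a) ^ 2 / b := by field_simp
    _ = 1 / (b * S ^ 2) := by rw [hsub]; field_simp
    _ ≤ 1 / (9 * a ^ 5) := by
      refine one_div_le_one_div_of_le (by positivity) ?_
      calc 9 * a ^ 5 = a * (3 * a ^ 2) ^ 2 := by ring
        _ ≤ b * S ^ 2 := by gcongr

lemma one_div_nine_mul_pow_five_le_sub {a c : ℝ} (hc : 0 < c) (h : c ^ 3 + 1 = a ^ 3) :
    1 / (9 * a ^ 5) ≤ 1 / (6 * c ^ 2) - 1 / (6 * a ^ 2) := by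
  have ha : 0 < a := by
    have : 0 < a ^ 3 := by rw [← h]; positivity
    exact (Odd.pow_pos_iff (by decide)).mp this
  have key : c ^ 2 * (3 * a ^ 3 + 2) ≤ 3 * a ^ 5 := by
    have hy : 1 ≤ a ^ 3 := by linarith [pow_pos hc 3]
    refine le_of_pow_le_pow_left₀ three_ne_zero (by positivity) ?_
    calc (c ^ 2 * (3 * a ^ 3 + 2)) ^ 3 = (a ^ 3 - 1) ^ 2 * (3 * a ^ 3 + 2) ^ 3 := by
          rw [← h]; ring
      _ ≤ 27 * (a ^ 3) ^ 5 := by nlinarith [sq_nonneg (a ^ 3)]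
      _ = (3 * a ^ 5) ^ 3 := by ring
  rw [div_sub_div _ _ (by positivity) (by positivity), div_le_div_iff₀ (by positivity) (by positivity)]
  nlinarith [mul_le_mul_of_nonneg_left key (by positivity : (0 : ℝ) ≤ 18 * a ^ 2)]

lemma rpow_mul_one_sub_div_sq_le_sub (x : ℝ) (hx : 1 < x) :
    (x + 1) ^ ((1 : ℝ) / 3) * (1 - x ^ ((1 : ℝ) / 3) / (x + 1) ^ ((1 : ℝ) / 3)) ^ 2
      ≤ 1 / (6 * (x - 1) ^ ((2 : ℝ) / 3)) - 1 / (6 * x ^ ((2 : ℝ) / 3)) := by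
  have hx0 : 0 ≤ x := by linarith
  rw [rpow_two_thirds_eq_sq (by linarith), rpow_two_thirds_eq_sq hx0]
  refine (mul_one_sub_div_sq_le_of_cube_sub_cube_eq_one (by positivity)
    (rpow_le_rpow hx0 (by linarith) (by norm_num)) ?_).trans
    (one_div_nine_mul_pow_five_le_sub (by apply rpow_pos_of_pos; linarith) ?_) <;>
  · rw [rpow_one_third_pow_three (by linarith), rpow_one_third_pow_three hx0]
    ring

theorem sum_rpow_diff_sq_upper_bound_general (K : ℕ) :
    ∑ k ∈ Finset.range K,
        ((k:ℝ) + 5)^((1:ℝ)/3) * (1 - ((k:ℝ) + 4)^((1:ℝ)/3) / ((k:ℝ) + 5)^((1:ℝ)/3))^2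
      ≤ 1 / (6 * (9:ℝ)^((1:ℝ)/3)) := by
  set g : ℕ → ℝ := fun k ↦ 1 / (6 * ((k : ℝ) + 3) ^ ((2 : ℝ) / 3))
  have hterm (k : ℕ) : ((k:ℝ) + 5)^((1:ℝ)/3) * (1 - ((k:ℝ) + 4)^((1:ℝ)/3) / ((k:ℝ) + 5)^((1:ℝ)/3))^2
      ≤ g k - g (k + 1) := by
    have := rpow_mul_one_sub_div_sq_le_sub ((k : ℝ) + 4) (by linarith [k.cast_nonneg (α := ℝ)])
    rw [show (k : ℝ) + 4 + 1 = k + 5 by ring, show (k : ℝ) + 4 - 1 = k + 3 by ring] at this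
    simpa only [g, Nat.cast_succ, show (k : ℝ) + 1 + 3 = k + 4 by ring] using this
  have hg_zero : g 0 = 1 / (6 * (9:ℝ)^((1:ℝ)/3)) := by
    rw [show (9 : ℝ) = 3 ^ (2 : ℝ) by norm_num, ← rpow_mul (by norm_num)]
    norm_num [g]
  calc _ ≤ ∑ k ∈ Finset.range K, (g k - g (k + 1)) := Finset.sum_le_sum fun k _ ↦ hterm k
    _ = g 0 - g K := Finset.sum_range_sub' g K
    _ ≤ g 0 := sub_le_self _ (by positivity)
    _ = _ := hg_zero

theorem sum_rpow_diff_sq_upper_bound (K : ℕ) (hK : 1 ≤ K) :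
    ∑ k ∈ Finset.range K,
        ((k:ℝ) + 5)^((1:ℝ)/3) * (1 - ((k:ℝ) + 4)^((1:ℝ)/3) / ((k:ℝ) + 5)^((1:ℝ)/3))^2
      ≤ 1 / (6 * (9:ℝ)^((1:ℝ)/3)) :=
  sum_rpow_diff_sq_upper_bound_general K
end

section
/- For each integer k ≥ 0 let β_k = 3((k+3)^{1/3} − (k+2)^{1/3}), and define Γ_0 = 1 and Γ_k = ∏_{i=0}^{k−1}(1−β_i)² for k ≥ 1. Then for all integers 0 ≤ k < j, Γ_j/Γ_k ≤ exp(−6((j+2)^{1/3} − (k+2)^{1/3})). -/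
/-! Since `1 - x ≤ exp (-x)`, the ratio `Γ j / Γ k = ∏_{k ≤ i < j} (1 - β i)²` is at most
`exp (-2 ∑_{k ≤ i < j} β i)`, provided every `β i ≤ 1`. The sum telescopes to
`3 ((j + 2)^{1/3} - (k + 2)^{1/3})`, and `β i < 1` because consecutive cube roots of numbers
`≥ 1` differ by less than `1/3`: `a³ - b³ = 1` gives `a - b = 1 / (a² + ab + b²)`. -/

open Real Finset

lemma one_sub_sq_le_exp_neg_two_mul {x : ℝ} (hx : x ≤ 1) : (1 - x) ^ 2 ≤ exp (-2 * x) := by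
  calc (1 - x) ^ 2 ≤ exp (-x) ^ 2 := pow_le_pow_left₀ (by linarith) (one_sub_le_exp_neg x) 2
    _ = exp (-2 * x) := by rw [← exp_nat_mul]; ring_nf

lemma prod_one_sub_sq_le_exp_neg_two_mul_sum {ι : Type*} (s : Finset ι) {f : ι → ℝ}
    (hf : ∀ i ∈ s, f i ≤ 1) : ∏ i ∈ s, (1 - f i) ^ 2 ≤ exp (-2 * ∑ i ∈ s, f i) := by
  rw [mul_sum, exp_sum]
  exact prod_le_prod (fun i _ => sq_nonneg _) fun i hi => one_sub_sq_le_exp_neg_two_mul (hf i hi)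

lemma rpow_one_third_add_one_sub_lt {x : ℝ} (hx : 1 ≤ x) :
    (x + 1) ^ (1 / 3 : ℝ) - x ^ (1 / 3 : ℝ) < 1 / 3 := by
  have cube : ∀ y : ℝ, 0 ≤ y → (y ^ (1 / 3 : ℝ)) ^ 3 = y := fun y hy => by
    rw [← rpow_natCast, ← rpow_mul hy]; norm_num
  set a := (x + 1) ^ (1 / 3 : ℝ)
  set b := x ^ (1 / 3 : ℝ)
  have ha : a ^ 3 = x + 1 := cube _ (by linarith)
  have hb : b ^ 3 = x := cube _ (by linarith)
  have hb1 : 1 ≤ b := one_le_rpow hx (by norm_num)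
  have hba : b < a := rpow_lt_rpow (by linarith) (by linarith) (by norm_num)
  have hdiff : (a - b) * (a ^ 2 + a * b + b ^ 2) = 1 := by linear_combination ha - hb
  have hsum : 3 < a ^ 2 + a * b + b ^ 2 := by nlinarith
  nlinarith

theorem pstorm_gamma_ratio_exp_bound (β Γ : ℕ → ℝ)
    (hβ : ∀ k : ℕ, β k = 3 * (((k:ℝ) + 3)^((1:ℝ)/3) - ((k:ℝ) + 2)^((1:ℝ)/3)))
    (hΓ : ∀ k : ℕ, Γ k = ∏ i ∈ Finset.range k, (1 - β i)^2) :
    ∀ k j : ℕ, k < j →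
      Γ j / Γ k ≤ Real.exp (-6 * (((j:ℝ) + 2)^((1:ℝ)/3) - ((k:ℝ) + 2)^((1:ℝ)/3))) := by
  intro k j hkj
  set g : ℕ → ℝ := fun n => 3 * ((n : ℝ) + 2) ^ ((1 : ℝ) / 3)
  have hβ_lt : ∀ i, β i < 1 := fun i => by
    have := rpow_one_third_add_one_sub_lt (x := (i : ℝ) + 2) (by linarith [i.cast_nonneg (α := ℝ)])
    rw [add_assoc, show (2 : ℝ) + 1 = 3 by norm_num] at this
    rw [hβ]; linarith
  have hβ_telescope : ∀ i, β i = g (i + 1) - g i := fun i => by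
    simp only [hβ, g]; push_cast; ring_nf
  have hΓk : Γ k ≠ 0 := by
    rw [hΓ]; exact prod_ne_zero_iff.2 fun i _ => pow_ne_zero 2 (sub_ne_zero.2 (hβ_lt i).ne')
  have hratio : Γ j / Γ k = ∏ i ∈ Ico k j, (1 - β i) ^ 2 := by
    rw [div_eq_iff hΓk, hΓ, hΓ, ← prod_range_mul_prod_Ico _ hkj.le, mul_comm]
  have hsum : ∑ i ∈ Ico k j, β i = g j - g k := by
    simp only [hβ_telescope]; exact sum_Ico_sub g hkj.le
  calc Γ j / Γ k ≤ exp (-2 * ∑ i ∈ Ico k j, β i) := by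
        rw [hratio]; exact prod_one_sub_sq_le_exp_neg_two_mul_sum _ fun i _ => (hβ_lt i).le
    _ = _ := by rw [hsum]; congr 1; ring
end

section
/- For all integers k ≥ 0 and K ≥ k+2, ∑_{j=k+1}^{K−1} exp(−6(j+2)^{1/3}) ≤ (1/36) exp(−6(k+2)^{1/3}) ( 18(k+2)^{2/3} + 6(k+2)^{1/3} + 1 ). -/
/-!
`expCbrtTail x = ∫_x^∞ exp (-6 t^{1/3}) dt`: the substitution `t = s³` turns it into
`tailOfCbrt (x^{1/3})`, where `tailOfCbrt s = (1/36) e^{-6s} (18 s² + 6 s + 1)` has derivative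
`-3 s² e^{-6s}`. As the integrand decreases, the mean value theorem gives
`exp (-6 (j+2)^{1/3}) ≤ expCbrtTail (j+1) - expCbrtTail (j+2)`, and the sum telescopes to at most
`expCbrtTail (k+2)`, which is the right-hand side.
-/

open Real Finset

namespace Finset

theorem sum_Ico_le_of_le_sub_succ {α : Type*} [AddCommGroup α] [PartialOrder α]
    [IsOrderedAddMonoid α] {u G : ℕ → α} {m n : ℕ} (hmn : m ≤ n)
    (huG : ∀ j ∈ Ico m n, u j ≤ G j - G (j + 1)) (hG : 0 ≤ G n) :
    ∑ j ∈ Ico m n, u j ≤ G m := by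
  calc ∑ j ∈ Ico m n, u j ≤ ∑ j ∈ Ico m n, (G j - G (j + 1)) := sum_le_sum huG
    _ = G m - G n := by
      rw [← neg_sub, ← sum_Ico_sub G hmn, ← sum_neg_distrib]
      simp only [neg_sub]
    _ ≤ G m := sub_le_self _ hG

end Finset

noncomputable def tailOfCbrt (s : ℝ) : ℝ :=
  (1/36) * exp (-6 * s) * (18 * s ^ 2 + 6 * s + 1)

noncomputable def expCbrtTail (x : ℝ) : ℝ :=
  tailOfCbrt (x ^ ((1:ℝ)/3))

theorem hasDerivAt_tailOfCbrt (s : ℝ) :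
    HasDerivAt tailOfCbrt (-3 * s ^ 2 * exp (-6 * s)) s := by
  have hexp : HasDerivAt (fun s => exp (-6 * s)) (exp (-6 * s) * -6) s := by
    simpa using ((hasDerivAt_id s).const_mul (-6)).exp
  have hpoly : HasDerivAt (fun s : ℝ => 18 * s ^ 2 + 6 * s + 1) (36 * s + 6) s := by
    refine ((((hasDerivAt_pow 2 s).const_mul 18).add
      ((hasDerivAt_id s).const_mul 6)).add_const 1).congr_deriv ?_
    simp only [Nat.cast_ofNat, Nat.add_one_sub_one, pow_one, mul_one]
    ring
  refine ((hexp.const_mul (1/36)).mul hpoly).congr_deriv ?_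
  ring

theorem tailOfCbrt_nonneg {s : ℝ} (hs : 0 ≤ s) : 0 ≤ tailOfCbrt s := by
  unfold tailOfCbrt; positivity

theorem rpow_third_sq {x : ℝ} (hx : 0 ≤ x) : (x ^ ((1:ℝ)/3)) ^ 2 = x ^ ((2:ℝ)/3) := by
  rw [← rpow_natCast, ← rpow_mul hx]; norm_num

theorem hasDerivAt_expCbrtTail {x : ℝ} (hx : 0 < x) :
    HasDerivAt expCbrtTail (-exp (-6 * x ^ ((1:ℝ)/3))) x := by
  have hcbrt : HasDerivAt (fun y : ℝ => y ^ ((1:ℝ)/3)) ((1/3) * x ^ ((1:ℝ)/3 - 1)) x :=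
    hasDerivAt_rpow_const (Or.inl hx.ne')
  have hcancel : x ^ ((2:ℝ)/3) * x ^ ((1:ℝ)/3 - 1) = 1 := by
    rw [← rpow_add hx]; norm_num
  refine ((hasDerivAt_tailOfCbrt _).comp x hcbrt).congr_deriv ?_
  rw [rpow_third_sq hx.le]
  linear_combination -(exp (-6 * x ^ ((1:ℝ)/3))) * hcancel

theorem exp_neg_cbrt_le_expCbrtTail_sub {t : ℝ} (ht : 0 < t) :
    exp (-6 * (t + 1) ^ ((1:ℝ)/3)) ≤ expCbrtTail t - expCbrtTail (t + 1) := by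
  obtain ⟨c, ⟨htc, hct⟩, hslope⟩ := exists_hasDerivAt_eq_slope expCbrtTail
    (fun y => -exp (-6 * y ^ ((1:ℝ)/3))) (lt_add_one t)
    (fun y hy => (hasDerivAt_expCbrtTail (ht.trans_le hy.1)).continuousAt.continuousWithinAt)
    (fun y hy => hasDerivAt_expCbrtTail (ht.trans hy.1))
  have hmean : expCbrtTail t - expCbrtTail (t + 1) = exp (-6 * c ^ ((1:ℝ)/3)) := by
    rw [add_sub_cancel_left, div_one] at hslope
    linarith
  rw [hmean, exp_le_exp]
  have hcbrt_le := rpow_le_rpow (ht.trans htc).le hct.le (by norm_num : (0:ℝ) ≤ 1/3)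
  linarith

theorem sum_exp_neg_rpow_third_bound (k K : ℕ) (hK : k + 2 ≤ K) :
    ∑ j ∈ Finset.Ico (k+1) K, Real.exp (-6 * ((j:ℝ) + 2)^((1:ℝ)/3))
      ≤ (1/36) * Real.exp (-6 * ((k:ℝ) + 2)^((1:ℝ)/3))
        * (18 * ((k:ℝ) + 2)^((2:ℝ)/3) + 6 * ((k:ℝ) + 2)^((1:ℝ)/3) + 1) := by
  have hRHS : expCbrtTail ((k + 1 : ℕ) + 1) = (1/36) * exp (-6 * ((k:ℝ) + 2)^((1:ℝ)/3))
      * (18 * ((k:ℝ) + 2)^((2:ℝ)/3) + 6 * ((k:ℝ) + 2)^((1:ℝ)/3) + 1) := by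
    rw [expCbrtTail, tailOfCbrt, rpow_third_sq (by positivity)]
    push_cast
    rw [add_assoc, one_add_one_eq_two]
  rw [← hRHS]
  refine sum_Ico_le_of_le_sub_succ (G := fun j : ℕ => expCbrtTail ((j:ℝ) + 1)) (by omega)
    (fun j _ => ?_) (tailOfCbrt_nonneg (by positivity))
  have hstep := exp_neg_cbrt_le_expCbrtTail_sub (t := (j:ℝ) + 1) (by positivity)
  simpa only [Nat.cast_add, Nat.cast_one, add_assoc, one_add_one_eq_two] using hstep
end

section
/- Let ε > 0, L > 0, σ ≥ 0, m ≥ 1, m₀ > 0 be reals, K ≥ 1 an integer, and 0 < η ≤ 1/4. For integers k ≥ 0 set η_k = η/(L K^{1/3}) and β_k = 3((k+3)^{1/3} − (k+2)^{1/3}). Let (Φ_k) be a real sequence and (E_k), (G_k), (Ḡ_k) nonnegative real sequences such that Φ_k ≥ Φ* for all k ≤ K with Φ* ∈ ℝ, E_0 ≤ σ²/m₀, and for every 0 ≤ k ≤ K−1: Φ_{k+1} − Φ_k ≤ (η_k/2) E_k − (η_k/2)(1 − η_k L) G_k, E_{k+1} ≤ (1−β_k)² E_k + 2β_k²σ²/m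 + (2(1−β_k)² η_k² L²/m) G_k, and Ḡ_k ≤ 2G_k + 2E_k. If K ≥ ( (12L/η)(Φ_0 − Φ*) + (2^{−1/3} + (1/6)·2^{1/3} + 1/36)(8σ²/m₀) + 12σ²L/(η m₀) + (32/(1 − 2^{−2/3})²)(σ²/m) )^{3/2} / ε³, then (1/K) ∑_{k=0}^{K−1} Ḡ_k ≤ ε². -/
/-!
A Lyapunov argument. With the weights `θₖ = (23/25) (k+2)^{2/3}` the error recursion yields
`θₖ₊₁ Eₖ₊₁ - θₖ Eₖ + Eₖ ≤ (184/25) (σ²/m) ((k+2)^{1/3} - (k+1)^{1/3}) + (23/200) Gₖ`,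
because `θₖ₊₁ (1 - βₖ)² ≤ θₖ - 1`, `θₖ₊₁ βₖ² ≤ (92/25) ((k+2)^{1/3} - (k+1)^{1/3})` and the
stepsize `η / (L K^{1/3})` with `η ≤ 1/4` keeps the coefficient of `Gₖ` below `23/200`.
Telescoping bounds `∑ Eₖ` by `O(E₀ + K^{1/3} σ²/m) + (23/200) ∑ Gₖ`, and telescoping the descent
inequality bounds `(3/8) ∑ Gₖ` by `K^{1/3} (L/η) (Φ₀ - Φ*) + (1/2) ∑ Eₖ`. Solving these two coupled
bounds gives `∑ Ḡₖ ≤ K^{1/3} W`, where `W` is the bracket in the hypothesis on `K`, and that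
hypothesis amounts to `W ≤ K^{2/3} ε²`.
-/

open Finset

lemma rpow_one_div_three_pow_three {t : ℝ} (ht : 0 ≤ t) : (t ^ ((1 : ℝ) / 3)) ^ 3 = t := by
  rw [one_div]
  exact_mod_cast Real.rpow_inv_natCast_pow ht three_ne_zero

lemma rpow_one_div_three_add_one_le {t : ℝ} (ht : 0 ≤ t) :
    (t + 1) ^ ((1 : ℝ) / 3) ≤ t ^ ((1 : ℝ) / 3) + 1 := by
  have hr : 0 ≤ t ^ ((1 : ℝ) / 3) := by positivity
  refine (pow_le_pow_iff_left₀ (by positivity) (by positivity) three_ne_zero).1 ?_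
  rw [rpow_one_div_three_pow_three (by positivity)]
  nlinarith [rpow_one_div_three_pow_three ht, mul_nonneg hr (mul_nonneg hr hr)]

lemma five_div_four_le_two_rpow_one_div_three : 5 / 4 ≤ (2 : ℝ) ^ ((1 : ℝ) / 3) := by
  refine (pow_le_pow_iff_left₀ (by norm_num) (by positivity) three_ne_zero).1 ?_
  rw [rpow_one_div_three_pow_three zero_le_two]
  norm_num

lemma two_rpow_one_div_three_le : (2 : ℝ) ^ ((1 : ℝ) / 3) ≤ 63 / 50 := by
  refine (pow_le_pow_iff_left₀ (by positivity) (by norm_num) three_ne_zero).1 ?_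
  rw [rpow_one_div_three_pow_three zero_le_two]
  norm_num

lemma sq_le_sq_add_one_of_pow_three_le {x ν : ℝ} (hx : 0 ≤ x) (hν : 0 ≤ ν)
    (h : x ^ 3 ≤ ν ^ 3 + 1) : x ^ 2 ≤ ν ^ 2 + 1 := by
  refine (pow_le_pow_iff_left₀ (by positivity) (by positivity) three_ne_zero).1 ?_
  calc (x ^ 2) ^ 3 = (x ^ 3) ^ 2 := by ring
    _ ≤ (ν ^ 3 + 1) ^ 2 := pow_le_pow_left₀ (by positivity) h 2
    _ ≤ (ν ^ 2 + 1) ^ 3 := by nlinarith [mul_nonneg (pow_nonneg hν 2) (sq_nonneg (ν - 1))]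

section ConsecutiveCubes

variable {a x y : ℝ}

lemma lt_of_pow_three_eq_add_one (hx : 0 ≤ x) (hy : 0 ≤ y) (h : y ^ 3 = x ^ 3 + 1) : x < y :=
  (pow_lt_pow_iff_left₀ hx hy three_ne_zero).1 (by linarith)

lemma three_mul_sq_mul_sub_le_one (hx : 0 ≤ x) (hy : 0 ≤ y) (h : y ^ 3 = x ^ 3 + 1) :
    3 * x ^ 2 * (y - x) ≤ 1 := by
  have hxy : 0 ≤ y - x := sub_nonneg.2 (lt_of_pow_three_eq_add_one hx hy h).le
  have hfactor : (y - x) * (x ^ 2 + x * y + y ^ 2) = 1 := by linear_combination h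
  nlinarith [mul_nonneg (mul_nonneg hxy hxy) (by positivity : 0 ≤ y + 2 * x)]

lemma one_le_three_mul_sq_mul_sub (hx : 0 ≤ x) (hy : 0 ≤ y) (h : y ^ 3 = x ^ 3 + 1) :
    1 ≤ 3 * y ^ 2 * (y - x) := by
  have hxy : 0 ≤ y - x := sub_nonneg.2 (lt_of_pow_three_eq_add_one hx hy h).le
  have hfactor : (y - x) * (x ^ 2 + x * y + y ^ 2) = 1 := by linear_combination h
  nlinarith [mul_nonneg (mul_nonneg hxy hxy) (by positivity : 0 ≤ 2 * y + x)]

lemma sq_le_of_pow_three_eq_add_one (hx : 0 < x) (hy : 0 ≤ y) (hx3 : 2 ≤ x ^ 3)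
    (h : y ^ 3 = x ^ 3 + 1) : y ^ 2 ≤ 4 / 3 * x ^ 2 := by
  have hy3 : y ^ 3 ≤ 3 / 2 * x ^ 3 := by linarith
  refine (pow_le_pow_iff_left₀ (by positivity) (by positivity) three_ne_zero).1 ?_
  calc (y ^ 2) ^ 3 = (y ^ 3) ^ 2 := by ring
    _ ≤ (3 / 2 * x ^ 3) ^ 2 := pow_le_pow_left₀ (by positivity) hy3 2
    _ ≤ (4 / 3 * x ^ 2) ^ 3 := by nlinarith [pow_pos hx 6]

lemma nine_mul_sq_mul_sub_sq_le (ha : 0 ≤ a) (hx : 0 < x) (hy : 0 ≤ y) (hx3 : 2 ≤ x ^ 3)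
    (hxa : x ^ 3 = a ^ 3 + 1) (hyx : y ^ 3 = x ^ 3 + 1) :
    9 * y ^ 2 * (y - x) ^ 2 ≤ 4 * (x - a) := by
  have hy2 := sq_le_of_pow_three_eq_add_one hx hy hx3 hyx
  have hyx1 := three_mul_sq_mul_sub_le_one hx.le hy hyx
  have hxa1 := one_le_three_mul_sq_mul_sub ha hx.le hxa
  have hyx0 : 0 ≤ 3 * x ^ 2 * (y - x) :=
    mul_nonneg (by positivity) (sub_nonneg.2 (lt_of_pow_three_eq_add_one hx.le hy hyx).le)
  have hsq : (3 * x ^ 2 * (y - x)) ^ 2 ≤ 3 * x ^ 2 * (x - a) := by nlinarith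
  refine le_of_mul_le_mul_right ?_ (pow_pos hx 2)
  calc 9 * y ^ 2 * (y - x) ^ 2 * x ^ 2 ≤ 9 * (4 / 3 * x ^ 2) * (y - x) ^ 2 * x ^ 2 := by gcongr
    _ = 4 / 3 * (3 * x ^ 2 * (y - x)) ^ 2 := by ring
    _ ≤ 4 * (x - a) * x ^ 2 := by linarith

lemma twenty_three_mul_sq_mul_one_sub_sq_add_le (hx : 0 < x) (hy : 0 ≤ y) (hx3 : 2 ≤ x ^ 3)
    (h : y ^ 3 = x ^ 3 + 1) : 23 * y ^ 2 * (1 - 3 * (y - x)) ^ 2 + 25 ≤ 23 * x ^ 2 := by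
  have hxy := (lt_of_pow_three_eq_add_one hx.le hy h).le
  have hy2 := sq_le_of_pow_three_eq_add_one hx hy hx3 h
  have hx54 : 5 / 4 ≤ x :=
    (pow_le_pow_iff_left₀ (by norm_num) hx.le three_ne_zero).1 (by linarith)
  set D := x ^ 2 + x * y + y ^ 2
  have hD : 0 < D := by positivity
  have hfactor : (y - x) * D = 1 := by linear_combination h
  -- `1 - 3 (y - x) = (D - 3) / D` and `(y² - x²) D = x + y`
  have hid : (23 * x ^ 2 - 23 * y ^ 2 * (1 - 3 * (y - x)) ^ 2 - 25) * D ^ 2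
      = (113 * y ^ 2 - 25 * x ^ 2 - 25 * x * y - 23 * x - 23 * y) * D - 207 * y ^ 2 := by
    linear_combination
      ((138 * y ^ 2 - 23 * x - 23 * y) * D - 207 * y ^ 2 * ((y - x) * D + 1)) * hfactor
  have hpoly : 207 * y ^ 2 ≤ (113 * y ^ 2 - 25 * x ^ 2 - 25 * x * y - 23 * x - 23 * y) * D := by
    nlinarith [mul_nonneg (sub_nonneg.2 hy2) (sub_nonneg.2 hx54),
      mul_nonneg (sub_nonneg.2 hxy) (sub_nonneg.2 hx54),
      mul_nonneg (mul_nonneg hx.le hx.le) (sub_nonneg.2 hy2),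
      mul_nonneg (mul_nonneg hx.le hx.le) (sub_nonneg.2 hxy), sq_nonneg (x - 5 / 4),
      sq_nonneg (x - y)]
  have := nonneg_of_mul_nonneg_left (hid ▸ sub_nonneg.2 hpoly) (pow_pos hD 2)
  linarith

end ConsecutiveCubes

/-- One step of the Lyapunov inequality, with `a, x, y` the cube roots of `k + 1, k + 2, k + 3`,
`ν = K^{1/3}` and stepsize `s`. -/
lemma lyapunov_error_step {σ m s L ν a x y E E' G : ℝ} (hm : 1 ≤ m) (hs : 0 ≤ s) (hL : 0 ≤ L)
    (hν : 0 ≤ ν) (hsLν : s * L * ν ≤ 1 / 4) (ha : 0 ≤ a) (hx : 0 < x) (hy : 0 ≤ y)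
    (hx3 : 2 ≤ x ^ 3) (hxa : x ^ 3 = a ^ 3 + 1) (hyx : y ^ 3 = x ^ 3 + 1)
    (hxν : x ^ 2 ≤ ν ^ 2 + 1) (hE : 0 ≤ E) (hG : 0 ≤ G)
    (hE' : E' ≤ (1 - 3 * (y - x)) ^ 2 * E + 2 * (3 * (y - x)) ^ 2 * σ ^ 2 / m
      + (2 * (1 - 3 * (y - x)) ^ 2 * s ^ 2 * L ^ 2 / m) * G) :
    23 / 25 * y ^ 2 * E' - 23 / 25 * x ^ 2 * E + E
      ≤ 184 / 25 * (σ ^ 2 / m) * (x - a) + 23 / 200 * G := by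
  set β := 3 * (y - x)
  have hcontr : 23 / 25 * y ^ 2 * (1 - β) ^ 2 ≤ 23 / 25 * x ^ 2 - 1 := by
    linarith [twenty_three_mul_sq_mul_one_sub_sq_add_le hx hy hx3 hyx]
  have hnoise : 23 / 25 * y ^ 2 * β ^ 2 ≤ 92 / 25 * (x - a) := by
    linarith [nine_mul_sq_mul_sub_sq_le ha hx hy hx3 hxa hyx]
  have hgrad : 23 / 25 * y ^ 2 * (1 - β) ^ 2 * (2 * s ^ 2 * L ^ 2 / m) ≤ 23 / 200 :=
    calc 23 / 25 * y ^ 2 * (1 - β) ^ 2 * (2 * s ^ 2 * L ^ 2 / m)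
        ≤ 23 / 25 * ν ^ 2 * (2 * s ^ 2 * L ^ 2 / m) :=
          mul_le_mul_of_nonneg_right (by linarith) (by positivity)
      _ = 46 / 25 * (s * L * ν) ^ 2 / m := by ring
      _ ≤ 46 / 25 * (1 / 4) ^ 2 / 1 := by gcongr
      _ = 23 / 200 := by norm_num
  calc 23 / 25 * y ^ 2 * E' - 23 / 25 * x ^ 2 * E + E
      ≤ 23 / 25 * y ^ 2 * ((1 - β) ^ 2 * E + 2 * β ^ 2 * σ ^ 2 / m
        + (2 * (1 - β) ^ 2 * s ^ 2 * L ^ 2 / m) * G) - 23 / 25 * x ^ 2 * E + E := by gcongr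
    _ = 23 / 25 * y ^ 2 * (1 - β) ^ 2 * E + 23 / 25 * y ^ 2 * β ^ 2 * (2 * (σ ^ 2 / m))
        + 23 / 25 * y ^ 2 * (1 - β) ^ 2 * (2 * s ^ 2 * L ^ 2 / m) * G
        - 23 / 25 * x ^ 2 * E + E := by ring
    _ ≤ (23 / 25 * x ^ 2 - 1) * E + 92 / 25 * (x - a) * (2 * (σ ^ 2 / m)) + 23 / 200 * G
        - 23 / 25 * x ^ 2 * E + E := by gcongr
    _ = 184 / 25 * (σ ^ 2 / m) * (x - a) + 23 / 200 * G := by ring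

lemma sum_range_le_sub_add_sum {a b Ψ : ℕ → ℝ} {K : ℕ}
    (h : ∀ k < K, a k ≤ Ψ k - Ψ (k + 1) + b k) :
    ∑ k ∈ range K, a k ≤ Ψ 0 - Ψ K + ∑ k ∈ range K, b k :=
  calc ∑ k ∈ range K, a k ≤ ∑ k ∈ range K, (Ψ k - Ψ (k + 1) + b k) :=
        sum_le_sum fun k hk => h k (mem_range.1 hk)
    _ = Ψ 0 - Ψ K + ∑ k ∈ range K, b k := by rw [sum_add_distrib, sum_range_sub']

lemma sum_estimator_error_le {σ m s L : ℝ} {K : ℕ} {β E G : ℕ → ℝ} (hm : 1 ≤ m) (hs : 0 ≤ s)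
    (hL : 0 ≤ L) (hsLν : s * L * (K : ℝ) ^ ((1 : ℝ) / 3) ≤ 1 / 4)
    (hβ : ∀ k : ℕ, β k = 3 * (((k : ℝ) + 3) ^ ((1 : ℝ) / 3) - ((k : ℝ) + 2) ^ ((1 : ℝ) / 3)))
    (hE : ∀ k, 0 ≤ E k) (hG : ∀ k, 0 ≤ G k)
    (herr : ∀ k < K, E (k + 1) ≤ (1 - β k) ^ 2 * E k + 2 * β k ^ 2 * σ ^ 2 / m
      + (2 * (1 - β k) ^ 2 * s ^ 2 * L ^ 2 / m) * G k) :
    ∑ k ∈ range K, E k ≤ 1461 / 1000 * E 0 + 184 / 25 * (σ ^ 2 / m) * (K : ℝ) ^ ((1 : ℝ) / 3)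
      + 23 / 200 * ∑ k ∈ range K, G k := by
  set ν := (K : ℝ) ^ ((1 : ℝ) / 3)
  set r : ℕ → ℝ := fun j => ((j : ℝ) + 1) ^ ((1 : ℝ) / 3) with hr
  have hr0 : ∀ j, 0 ≤ r j := fun j => by positivity
  have hr3 : ∀ j, r j ^ 3 = j + 1 := fun j => rpow_one_div_three_pow_three (by positivity)
  set c := 184 / 25 * (σ ^ 2 / m) with hc_def
  have hc : 0 ≤ c := by positivity
  have hstep : ∀ k < K, E k ≤ (23 / 25 * r (k + 1) ^ 2 * E k - c * r k)
      - (23 / 25 * r (k + 1 + 1) ^ 2 * E (k + 1) - c * r (k + 1)) + 23 / 200 * G k := by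
    intro k hk
    have hβr : β k = 3 * (r (k + 1 + 1) - r (k + 1)) := by
      rw [hβ]; simp only [hr]; push_cast; ring_nf
    have hkK : ((k + 1 : ℕ) : ℝ) ≤ K := by exact_mod_cast hk
    have hx3 : 2 ≤ r (k + 1) ^ 3 := by
      rw [hr3]; push_cast; linarith [(k.cast_nonneg : (0 : ℝ) ≤ k)]
    have hxa : r (k + 1) ^ 3 = r k ^ 3 + 1 := by rw [hr3, hr3]; push_cast; ring
    have hyx : r (k + 1 + 1) ^ 3 = r (k + 1) ^ 3 + 1 := by rw [hr3, hr3]; push_cast; ring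
    have hxν : r (k + 1) ^ 2 ≤ ν ^ 2 + 1 := by
      refine sq_le_sq_add_one_of_pow_three_le (hr0 _) (by positivity) ?_
      rw [hr3, rpow_one_div_three_pow_three K.cast_nonneg]
      linarith
    have := lyapunov_error_step hm hs hL (by positivity) hsLν (hr0 k) (by positivity)
      (hr0 (k + 1 + 1)) hx3 hxa hyx hxν (hE k) (hG k) (hβr ▸ herr k hk)
    rw [← hc_def] at this
    linarith
  have hsum := sum_range_le_sub_add_sum hstep
  rw [← mul_sum, zero_add] at hsum
  have hθ₀ : 23 / 25 * r 1 ^ 2 ≤ 1461 / 1000 := by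
    have hr1 : r 1 = (2 : ℝ) ^ ((1 : ℝ) / 3) := by norm_num [hr]
    rw [hr1]
    nlinarith [two_rpow_one_div_three_le, hr0 1]
  have hr₀ : r 0 = 1 := by norm_num [hr]
  have hrK : r K ≤ ν + 1 := rpow_one_div_three_add_one_le K.cast_nonneg
  nlinarith [mul_le_mul_of_nonneg_right hθ₀ (hE 0), mul_le_mul_of_nonneg_left hrK hc,
    mul_nonneg (mul_nonneg (by norm_num : (0 : ℝ) ≤ 23 / 25) (sq_nonneg (r (K + 1)))) (hE K)]

lemma sum_grad_mapping_le {s L Φstar : ℝ} {K : ℕ} {Φ E G : ℕ → ℝ} (hs : 0 < s)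
    (hsL : s * L ≤ 1 / 4) (hG : ∀ k, 0 ≤ G k) (hΦK : Φstar ≤ Φ K)
    (hdesc : ∀ k < K, Φ (k + 1) - Φ k ≤ s / 2 * E k - s / 2 * (1 - s * L) * G k) :
    3 / 8 * ∑ k ∈ range K, G k ≤ (Φ 0 - Φstar) / s + 1 / 2 * ∑ k ∈ range K, E k := by
  have hsum := sum_range_le_sub_add_sum (Ψ := Φ) (a := fun k => s * (3 / 8 * G k))
    (b := fun k => s * (1 / 2 * E k)) fun k hk => by
      nlinarith [hdesc k hk, mul_nonneg (mul_nonneg hs.le (hG k)) (sub_nonneg.2 hsL)]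
  simp only [← mul_sum] at hsum
  rw [div_add' _ _ _ hs.ne', le_div_iff₀ hs]
  linarith

lemma le_of_coupled_sum_bounds {SGb SG SE E₀ e q Δ ν : ℝ} (hν : 1 ≤ ν) (hΔ : 0 ≤ Δ)
    (hq : 0 ≤ q) (hE₀ : 0 ≤ E₀) (he : E₀ ≤ e)
    (hSE : SE ≤ 1461 / 1000 * E₀ + 184 / 25 * q * ν + 23 / 200 * SG)
    (hSG : 3 / 8 * SG ≤ ν * Δ / 12 + 1 / 2 * SE) (hSGb : SGb ≤ 2 * SG + 2 * SE) :
    SGb ≤ ν * (Δ + 8128 / 1000 * e + 128 * q) := by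
  have hν0 : 0 ≤ ν := zero_le_one.trans hν
  nlinarith [mul_le_mul_of_nonneg_left hν (hE₀.trans he), mul_nonneg hν0 hΔ, mul_nonneg hq hν0]

lemma complexity_bracket_ge {Δ b c d : ℝ} (hb : 0 ≤ b) (hc : 0 ≤ c) (hd : 0 ≤ d) :
    Δ + 8128 / 1000 * b + 128 * d ≤ Δ
      + ((2 : ℝ) ^ (-(1 : ℝ) / 3) + 1 / 6 * (2 : ℝ) ^ ((1 : ℝ) / 3) + 1 / 36) * (8 * b) + c
      + 32 / (1 - (2 : ℝ) ^ (-(2 : ℝ) / 3)) ^ 2 * d := by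
  have hinv : 50 / 63 ≤ (2 : ℝ) ^ (-(1 : ℝ) / 3) := by
    rw [neg_div, Real.rpow_neg zero_le_two, ← inv_div]
    exact inv_anti₀ (by positivity) two_rpow_one_div_three_le
  have hb' : 8128 / 1000 ≤
      8 * ((2 : ℝ) ^ (-(1 : ℝ) / 3) + 1 / 6 * (2 : ℝ) ^ ((1 : ℝ) / 3) + 1 / 36) := by
    linarith [five_div_four_le_two_rpow_one_div_three]
  have hlt : (2 : ℝ) ^ (-(2 : ℝ) / 3) < 1 :=
    Real.rpow_lt_one_of_one_lt_of_neg one_lt_two (by norm_num)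
  have hge : 1 / 2 ≤ (2 : ℝ) ^ (-(2 : ℝ) / 3) :=
    calc (1 / 2 : ℝ) = 2 ^ (-1 : ℝ) := by norm_num
      _ ≤ 2 ^ (-(2 : ℝ) / 3) := Real.rpow_le_rpow_of_exponent_le one_le_two (by norm_num)
  have hd' : 128 ≤ 32 / (1 - (2 : ℝ) ^ (-(2 : ℝ) / 3)) ^ 2 := by
    rw [le_div_iff₀ (by nlinarith)]
    nlinarith
  nlinarith [mul_le_mul_of_nonneg_right hb' hb, mul_le_mul_of_nonneg_right hd' hd]

lemma le_rpow_one_div_three_sq_mul_sq {W ε K : ℝ} (hε : 0 < ε) (hK : 0 ≤ K)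
    (h : W ^ ((3 : ℝ) / 2) / ε ^ 3 ≤ K) : W ≤ (K ^ ((1 : ℝ) / 3)) ^ 2 * ε ^ 2 := by
  rcases lt_or_ge W 0 with hW | hW
  · exact hW.le.trans (by positivity)
  have h' : W ^ ((3 : ℝ) / 2) ≤ K * ε ^ 3 := (div_le_iff₀ (by positivity)).1 h
  calc W = (W ^ ((3 : ℝ) / 2)) ^ ((2 : ℝ) / 3) := by rw [← Real.rpow_mul hW]; norm_num
    _ ≤ (K * ε ^ 3) ^ ((2 : ℝ) / 3) := Real.rpow_le_rpow (by positivity) h' (by norm_num)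
    _ = K ^ ((2 : ℝ) / 3) * ε ^ 2 := by
      rw [Real.mul_rpow hK (by positivity), ← Real.rpow_natCast ε 3, ← Real.rpow_mul hε.le]
      norm_num
    _ = (K ^ ((1 : ℝ) / 3)) ^ 2 * ε ^ 2 := by
      rw [← Real.rpow_natCast (K ^ _) 2, ← Real.rpow_mul hK]
      norm_num

theorem pstorm_complexity_constant_stepsize_II_general
    (ε L σ m m₀ : ℝ) (hε : 0 < ε) (hL : 0 < L) (hm : 1 ≤ m) (hm₀ : 0 < m₀)
    (K : ℕ) (hK : 1 ≤ K) (η : ℝ) (hη : 0 < η) (hη2 : η ≤ 1/4)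
    (ηk βk : ℕ → ℝ)
    (hηk : ∀ k : ℕ, ηk k = η / (L * (K:ℝ)^((1:ℝ)/3)))
    (hβk : ∀ k : ℕ, βk k = 3 * (((k:ℝ) + 3)^((1:ℝ)/3) - ((k:ℝ) + 2)^((1:ℝ)/3)))
    (Φ E G Gb : ℕ → ℝ) (Φstar : ℝ)
    (hΦ : ∀ k ≤ K, Φstar ≤ Φ k)
    (hE : ∀ k, 0 ≤ E k) (hG : ∀ k, 0 ≤ G k)
    (hE0 : E 0 ≤ σ^2 / m₀)
    (hdesc : ∀ k < K, Φ (k+1) - Φ k ≤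
      (ηk k / 2) * E k - (ηk k / 2) * (1 - ηk k * L) * G k)
    (herr : ∀ k < K, E (k+1) ≤ (1 - βk k)^2 * E k + 2 * (βk k)^2 * σ^2 / m
      + (2 * (1 - βk k)^2 * (ηk k)^2 * L^2 / m) * G k)
    (hbar : ∀ k < K, Gb k ≤ 2 * G k + 2 * E k)
    (hKbig : ( (12 * L / η) * (Φ 0 - Φstar)
        + ((2:ℝ)^(-(1:ℝ)/3) + (1/6) * (2:ℝ)^((1:ℝ)/3) + 1/36) * (8 * σ^2 / m₀)
        + 12 * σ^2 * L / (η * m₀)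
        + (32 / (1 - (2:ℝ)^(-(2:ℝ)/3))^2) * (σ^2 / m) )^((3:ℝ)/2) / ε^3 ≤ (K:ℝ)) :
    (1 / (K:ℝ)) * ∑ k ∈ Finset.range K, Gb k ≤ ε^2 := by
  have hK0 : (0 : ℝ) < K := by exact_mod_cast hK
  set ν := (K : ℝ) ^ ((1 : ℝ) / 3) with hν
  have hν1 : 1 ≤ ν := Real.one_le_rpow (by exact_mod_cast hK) (by norm_num)
  have hν3 : ν ^ 3 = K := rpow_one_div_three_pow_three hK0.le
  set s := η / (L * ν) with hs_def
  have hs : 0 < s := by positivity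
  have hsLν : s * L * ν = η := by rw [hs_def]; field_simp
  have hsL : s * L ≤ 1 / 4 := (le_mul_of_one_le_right (by positivity) hν1).trans (hsLν ▸ hη2)
  simp only [hηk] at hdesc herr
  have hSE := sum_estimator_error_le hm hs.le hL.le (hsLν ▸ hη2) hβk hE hG herr
  rw [← hν] at hSE
  have hSG := sum_grad_mapping_le hs hsL hG (hΦ K le_rfl) hdesc
  rw [show (Φ 0 - Φstar) / s = ν * (12 * L / η * (Φ 0 - Φstar)) / 12 by rw [hs_def]; field_simp]
    at hSG
  have hSGb : ∑ k ∈ range K, Gb k ≤ 2 * ∑ k ∈ range K, G k + 2 * ∑ k ∈ range K, E k := by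
    simpa only [sum_add_distrib, ← mul_sum] using sum_le_sum fun k hk => hbar k (mem_range.1 hk)
  have hΔ : 0 ≤ 12 * L / η * (Φ 0 - Φstar) :=
    mul_nonneg (by positivity) (sub_nonneg.2 (hΦ 0 K.zero_le))
  have hsum := le_of_coupled_sum_bounds hν1 hΔ (by positivity) (hE 0) hE0 hSE hSG hSGb
  have hbracket : 12 * L / η * (Φ 0 - Φstar) + 8128 / 1000 * (σ ^ 2 / m₀) + 128 * (σ ^ 2 / m)
      ≤ ν ^ 2 * ε ^ 2 :=
    ((complexity_bracket_ge (c := 12 * σ ^ 2 * L / (η * m₀)) (by positivity) (by positivity)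
      (by positivity)).trans_eq (by ring)).trans (le_rpow_one_div_three_sq_mul_sq hε hK0.le hKbig)
  calc 1 / (K : ℝ) * ∑ k ∈ range K, Gb k ≤ 1 / K * (ν * (ν ^ 2 * ε ^ 2)) := by
        gcongr
        exact hsum.trans (mul_le_mul_of_nonneg_left hbracket (by positivity))
    _ = ε ^ 2 := by rw [← hν3]; field_simp

theorem pstorm_complexity_constant_stepsize_II
    (ε L σ m m₀ : ℝ) (hε : 0 < ε) (hL : 0 < L) (hσ : 0 ≤ σ) (hm : 1 ≤ m) (hm₀ : 0 < m₀)
    (K : ℕ) (hK : 1 ≤ K) (η : ℝ) (hη : 0 < η) (hη2 : η ≤ 1/4)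
    (ηk βk : ℕ → ℝ)
    (hηk : ∀ k : ℕ, ηk k = η / (L * (K:ℝ)^((1:ℝ)/3)))
    (hβk : ∀ k : ℕ, βk k = 3 * (((k:ℝ) + 3)^((1:ℝ)/3) - ((k:ℝ) + 2)^((1:ℝ)/3)))
    (Φ E G Gb : ℕ → ℝ) (Φstar : ℝ)
    (hΦ : ∀ k ≤ K, Φstar ≤ Φ k)
    (hE : ∀ k, 0 ≤ E k) (hG : ∀ k, 0 ≤ G k) (hGb : ∀ k, 0 ≤ Gb k)
    (hE0 : E 0 ≤ σ^2 / m₀)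
    (hdesc : ∀ k < K, Φ (k+1) - Φ k ≤
      (ηk k / 2) * E k - (ηk k / 2) * (1 - ηk k * L) * G k)
    (herr : ∀ k < K, E (k+1) ≤ (1 - βk k)^2 * E k + 2 * (βk k)^2 * σ^2 / m
      + (2 * (1 - βk k)^2 * (ηk k)^2 * L^2 / m) * G k)
    (hbar : ∀ k < K, Gb k ≤ 2 * G k + 2 * E k)
    (hKbig : ( (12 * L / η) * (Φ 0 - Φstar)
        + ((2:ℝ)^(-(1:ℝ)/3) + (1/6) * (2:ℝ)^((1:ℝ)/3) + 1/36) * (8 * σ^2 / m₀)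
        + 12 * σ^2 * L / (η * m₀)
        + (32 / (1 - (2:ℝ)^(-(2:ℝ)/3))^2) * (σ^2 / m) )^((3:ℝ)/2) / ε^3 ≤ (K:ℝ)) :
    (1 / (K:ℝ)) * ∑ k ∈ Finset.range K, Gb k ≤ ε^2 :=
  pstorm_complexity_constant_stepsize_II_general ε L σ m m₀ hε hL hm hm₀ K hK η hη hη2 ηk βk hηk hβk
    Φ E G Gb Φstar hΦ hE hG hE0 hdesc herr hbar hKbig
end
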